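/- Let (X, B, μ) be a measure space, let 1 ≤ a < b ≤ ∞, and let ψ : ℝ → ℝ be positive on (a, b). Set a' = a/(a − 1), b' = b/(b − 1) (with ∞' = 1), and define the adjacent function ν(q) = 1/ψ(q/(q − 1)) for q ∈ (b', a'). Let A, B ≥ 0, let f : X → ℝ be measurable with ‖f‖_{L^p(μ)} ≤ A · ψ(p) for all p ∈ (a, b), and let g : X → ℝ be measurable with ‖g‖_{L^q(μ)} ≤ B · ν(q) for all q ∈ (b', a'). Then f·g is μ-integrable and |∫_X f(x) g(x) dμ(x)| ≤ A · B. -/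

import Mathlib

open MeasureTheory ENNReal

/-- The conjugate exponent `p' = p/(p-1)` in `ℝ≥0∞`, with the conventions
`1' = ∞` and `∞' = 1`. -/
noncomputable def conjExp (p : ℝ≥0∞) : ℝ≥0∞ := 1 + 1 / (p - 1)

lemma conjExp_strictAnti {x y : ℝ≥0∞} (h1 : 1 ≤ x) (h : x < y) :
    conjExp y < conjExp x := by
  unfold conjExp
  refine ENNReal.add_lt_add_left one_ne_top ?_
  rw [one_div, one_div]
  refine ENNReal.inv_lt_inv.mpr ?_
  refine ENNReal.sub_lt_of_lt_add h1 ?_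
  rwa [tsub_add_cancel_of_le (h1.trans h.le)]

lemma inv_add_conjExp_inv {u : ℝ≥0∞} (h0 : u ≠ 0) (hT : u ≠ ⊤) :
    (u + 1)⁻¹ + (1 + u⁻¹)⁻¹ = 1 := by
  have h1 : (1 : ℝ≥0∞) + u⁻¹ = (u + 1) * u⁻¹ := by
    rw [add_mul, one_mul, ENNReal.mul_inv_cancel h0 hT]
  rw [h1, ENNReal.mul_inv (Or.inl (by simp)) (Or.inl (by simp [hT])), inv_inv u,
    ← mul_one ((u + 1)⁻¹), mul_assoc, one_mul, ← mul_add, add_comm u 1,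
    ENNReal.inv_mul_cancel (by simp) (by simp [hT])]

/-- If `‖f‖_{L^p} ≤ A ψ(p)` on `(a,b)` and `‖g‖_{L^q} ≤ B ν(q)` on
`(b',a')`, where `ν(q) = 1/ψ(q/(q-1))` is the adjacent function, then `f·g` is
integrable and `|∫ f g| ≤ A·B`. -/
theorem statement2 {X : Type*} [MeasurableSpace X] (μ : Measure X)
    (a b : ℝ≥0∞) (ha : 1 ≤ a) (hab : a < b)
    (ψ : ℝ≥0∞ → ℝ) (hψ : ∀ p ∈ Set.Ioo a b, 0 < ψ p)
    (A B : ℝ) (hA : 0 ≤ A) (hB : 0 ≤ B)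
    (f : X → ℝ) (hf : Measurable f)
    (hfψ : ∀ p ∈ Set.Ioo a b, eLpNorm f p μ ≤ ENNReal.ofReal (A * ψ p))
    (g : X → ℝ) (hg : Measurable g)
    (hgν : ∀ q ∈ Set.Ioo (conjExp b) (conjExp a),
      eLpNorm g q μ ≤ ENNReal.ofReal (B * (1 / ψ (conjExp q)))) :
    Integrable (fun x => f x * g x) μ ∧ |∫ x, f x * g x ∂μ| ≤ A * B := by
  obtain ⟨p, hap, hpb⟩ := exists_between hab
  have hp1 : 1 < p := lt_of_le_of_lt ha hap
  have hpT : p ≠ ⊤ := (hpb.trans_le le_top).ne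
  set u := p - 1 with hu
  have hu0 : u ≠ 0 := fun h => absurd (tsub_eq_zero_iff_le.mp h) hp1.not_ge
  have huT : u ≠ ⊤ := ENNReal.sub_ne_top hpT
  have hpu : p = u + 1 := (tsub_add_cancel_of_le hp1.le).symm
  have hqdef : conjExp p = 1 + u⁻¹ := by rw [conjExp, one_div]
  -- conjugacy: 1/1 = 1/p + 1/(conjExp p)
  have hsum : 1 / (1 : ℝ≥0∞) = 1 / p + 1 / conjExp p := by
    rw [hqdef, one_div, one_div, one_div, inv_one, hpu]
    exact (inv_add_conjExp_inv hu0 huT).symm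
  -- conjExp (conjExp p) = p
  have hcc : conjExp (conjExp p) = p := by
    rw [hqdef, conjExp, ENNReal.add_sub_cancel_left one_ne_top, one_div, inv_inv,
      add_comm, ← hpu]
  -- conjExp p ∈ Ioo (conjExp b) (conjExp a)
  have hqmem : conjExp p ∈ Set.Ioo (conjExp b) (conjExp a) :=
    ⟨conjExp_strictAnti hp1.le hpb, conjExp_strictAnti ha hap⟩
  have hψp : 0 < ψ p := hψ p ⟨hap, hpb⟩
  have hF := hfψ p ⟨hap, hpb⟩
  have hG := hgν (conjExp p) hqmem
  rw [hcc] at hG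
  -- Hölder
  have hH : eLpNorm (fun x => f x * g x) 1 μ ≤ eLpNorm f p μ * eLpNorm g (conjExp p) μ := by
    haveI : ENNReal.HolderTriple p (conjExp p) 1 := ⟨by simpa [one_div] using hsum.symm⟩
    simpa using eLpNorm_le_eLpNorm_mul_eLpNorm'_of_norm hf.aestronglyMeasurable
      hg.aestronglyMeasurable (· * ·) 1 (Filter.Eventually.of_forall fun x => by simp [norm_mul])
  have hkey : eLpNorm (fun x => f x * g x) 1 μ ≤ ENNReal.ofReal (A * B) := by
    refine hH.trans ?_
    calc eLpNorm f p μ * eLpNorm g (conjExp p) μ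
        ≤ ENNReal.ofReal (A * ψ p) * ENNReal.ofReal (B * (1 / ψ p)) := mul_le_mul' hF hG
      _ = ENNReal.ofReal ((A * ψ p) * (B * (1 / ψ p))) :=
          (ENNReal.ofReal_mul (mul_nonneg hA hψp.le)).symm
      _ = ENNReal.ofReal (A * B) := by
          congr 1
          field_simp
  have hint : Integrable (fun x => f x * g x) μ :=
    memLp_one_iff_integrable.mp ⟨(hf.mul hg).aestronglyMeasurable,
      lt_of_le_of_lt hkey ENNReal.ofReal_lt_top⟩
  refine ⟨hint, ?_⟩
  have h3 : ENNReal.ofReal (∫ x, ‖f x * g x‖ ∂μ) = eLpNorm (fun x => f x * g x) 1 μ := by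
    rw [ofReal_integral_norm_eq_lintegral_enorm hint, eLpNorm_one_eq_lintegral_enorm]
  have h4 : ∫ x, ‖f x * g x‖ ∂μ ≤ A * B := by
    refine (ENNReal.ofReal_le_ofReal_iff (mul_nonneg hA hB)).mp ?_
    rw [h3]; exact hkey
  calc |∫ x, f x * g x ∂μ| ≤ ∫ x, ‖f x * g x‖ ∂μ := by
        simpa [Real.norm_eq_abs] using norm_integral_le_integral_norm (fun x => f x * g x)
    _ ≤ A * B := h4
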